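/- Let M be a finitely generated Aₙ(K)-module, and let φ_M(t₁,t₂) and ψ_M(t) be, respectively, the bivariate characteristic polynomial and the Bernstein polynomial associated with the same finite system of generators of M. Then ψ_M(r) ≤ φ_M(r,r) ≤ ψ_M(2r) for all sufficiently large r ∈ ℤ; consequently deg ψ_M(t) = deg φ_M(t₁,t₂), and (for M ≠ 0) M belongs to the Bernstein class 𝓑ₙ if and only if deg φ_M(t₁,t₂) = n. -/

import Mathlib

open scoped BigOperators

set_option maxHeartbeats 1000000
set_option synthInstance.maxHeartbeats 400000

/-- The operator of multiplication by the variable `xᵢ` on `K[x₁,…,xₙ]`. -/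
noncomputable def mulX (K : Type*) [CommRing K] (n : ℕ) (i : Fin n) :
    Module.End K (MvPolynomial (Fin n) K) :=
  LinearMap.mulLeft K (MvPolynomial.X i)

/-- The partial differentiation operator `∂ᵢ` on `K[x₁,…,xₙ]`. -/
noncomputable def pdOp (K : Type*) [CommRing K] (n : ℕ) (i : Fin n) :
    Module.End K (MvPolynomial (Fin n) K) :=
  (MvPolynomial.pderiv (R := K) i).toLinearMap

/-- The Weyl algebra `Aₙ(K)`: the `K`-subalgebra of `End_K K[x₁,…,xₙ]`
generated by the multiplication operators `xᵢ` and the derivations `∂ᵢ`. -/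
noncomputable def WeylAlgebra (K : Type*) [CommRing K] (n : ℕ) :
    Subalgebra K (Module.End K (MvPolynomial (Fin n) K)) :=
  Algebra.adjoin K (Set.range (mulX K n) ∪ Set.range (pdOp K n))

/-- The monomial `x^α ∂^β` as an endomorphism of `K[x₁,…,xₙ]`. -/
noncomputable def wMonEnd (K : Type*) [CommRing K] (n : ℕ) (α β : Fin n → ℕ) :
    Module.End K (MvPolynomial (Fin n) K) :=
  (List.ofFn fun i => mulX K n i ^ α i).prod * (List.ofFn fun i => pdOp K n i ^ β i).prod

lemma wMonEnd_mem (K : Type*) [CommRing K] (n : ℕ) (α β : Fin n → ℕ) :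
    wMonEnd K n α β ∈ WeylAlgebra K n := by
  apply mul_mem
  · apply list_prod_mem
    intro D hD
    obtain ⟨i, rfl⟩ := List.mem_ofFn.mp hD
    exact pow_mem (Algebra.subset_adjoin (Set.mem_union_left _ (Set.mem_range_self i))) _
  · apply list_prod_mem
    intro D hD
    obtain ⟨i, rfl⟩ := List.mem_ofFn.mp hD
    exact pow_mem (Algebra.subset_adjoin (Set.mem_union_right _ (Set.mem_range_self i))) _

/-- The monomial `x^α ∂^β` as an element of the Weyl algebra. -/
noncomputable def wMon (K : Type*) [CommRing K] (n : ℕ) (α β : Fin n → ℕ) :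
    WeylAlgebra K n :=
  ⟨wMonEnd K n α β, wMonEnd_mem K n α β⟩

/-- The `r`-th component `W_r` of the Bernstein filtration of `Aₙ(K)`:
the `K`-span of the monomials `x^α ∂^β` with `|α| + |β| ≤ r`. -/
noncomputable def bernW (K : Type*) [Field K] (n : ℕ) (r : ℕ) :
    Submodule K (WeylAlgebra K n) :=
  Submodule.span K {D | ∃ α β : Fin n → ℕ,
    (∑ i, α i) + (∑ i, β i) ≤ r ∧ D = wMon K n α β}

/-- The natural (Bernstein) filtration `M_r = Σᵢ W_r gᵢ` of a module over
the Weyl algebra associated with a system of generators `g`. -/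
noncomputable def bernFil (K : Type*) [Field K] (n : ℕ) (M : Type*) [AddCommGroup M]
    [Module (WeylAlgebra K n) M] [Module K M] [IsScalarTower K (WeylAlgebra K n) M]
    (p : ℕ) (g : Fin p → M) (r : ℕ) : Submodule K M :=
  Submodule.span K {x | ∃ (α β : Fin n → ℕ) (j : Fin p),
    (∑ i, α i) + (∑ i, β i) ≤ r ∧ x = wMon K n α β • g j}

/-- The natural bifiltration `M_{rs} = Σᵢ W_{rs} gᵢ`. -/
noncomputable def biFil (K : Type*) [Field K] (n : ℕ) (M : Type*) [AddCommGroup M]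
    [Module (WeylAlgebra K n) M] [Module K M] [IsScalarTower K (WeylAlgebra K n) M]
    (p : ℕ) (g : Fin p → M) (r s : ℕ) : Submodule K M :=
  Submodule.span K {x | ∃ (α β : Fin n → ℕ) (j : Fin p),
    (∑ i, α i) ≤ r ∧ (∑ i, β i) ≤ s ∧ x = wMon K n α β • g j}

/-- A module `M` belongs to the Bernstein class `𝓑ₙ` if it is finitely
generated over `Aₙ(K)` and the Bernstein polynomial associated with some
(equivalently, by invariance, any) finite system of generators has degree `n`. -/
def InBernsteinClass (K : Type*) [Field K] [CharZero K] (n : ℕ)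
    (M : Type*) [AddCommGroup M] [Module (WeylAlgebra K n) M]
    [Module K M] [IsScalarTower K (WeylAlgebra K n) M] : Prop :=
  ∃ (p : ℕ) (g : Fin p → M) (ψ : Polynomial ℚ),
    Submodule.span (WeylAlgebra K n) (Set.range g) = ⊤ ∧
    (∃ r₀ : ℕ, ∀ r : ℕ, r₀ ≤ r →
      ψ.eval (r : ℚ) = Module.finrank K (bernFil K n M p g r)) ∧
    ψ.natDegree = n

/-!
The inclusions `M_r ⊆ M_{rr}` and `M_{rs} ⊆ M_{r+s}` give the inequalities between the
dimensions. Hence `ψ(r) ≤ φ(r,r)` bounds `deg ψ` by `deg φ`; conversely, on a line `(ut, t)`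
along which `φ` keeps its total degree, `φ(ut, t) ≤ ψ((u+1)t)` bounds `deg φ` by `deg ψ`.

For the Bernstein class, `deg ψ` must not depend on the generators. The relation
`∂ᵢ x^α = x^α ∂ᵢ + αᵢ x^{α - eᵢ}` gives `W_r W_s ⊆ W_{r+s}`, so any other finite system of
generators lies in some `M_c`, and its filtration satisfies `M'_r ⊆ M_{r+c}`.
-/

open Polynomial Filter

namespace Polynomial

variable {𝕜 : Type*} [NormedField 𝕜] [LinearOrder 𝕜] [IsStrictOrderedRing 𝕜] [OrderTopology 𝕜]
  [Archimedean 𝕜]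

theorem natDegree_le_of_eventually_le {p q : 𝕜[X]}
    (h₀ : ∀ᶠ k : ℕ in atTop, 0 ≤ p.eval (k : 𝕜))
    (h : ∀ᶠ k : ℕ in atTop, p.eval (k : 𝕜) ≤ q.eval (k : 𝕜)) :
    p.natDegree ≤ q.natDegree := by
  by_contra! hlt
  have hpos : 0 < p.degree := natDegree_pos_iff_degree_pos.1 (Nat.zero_lt_of_lt hlt)
  have hqp : q.degree < p.degree := degree_lt_degree hlt
  rcases le_total 0 p.leadingCoeff with hp | hp
  · have hdiff : Tendsto (fun k : ℕ => (p - q).eval (k : 𝕜)) atTop atTop :=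
      ((p - q).tendsto_atTop_of_leadingCoeff_nonneg
        (by rwa [degree_sub_eq_left_of_degree_lt hqp])
        (by rwa [leadingCoeff_sub_of_degree_lt hqp])).comp tendsto_natCast_atTop_atTop
    obtain ⟨k, hk, hle⟩ := ((hdiff.eventually_gt_atTop 0).and h).exists
    rw [eval_sub] at hk
    linarith
  · obtain ⟨k, hk, hnn⟩ := ((((p.tendsto_atBot_of_leadingCoeff_nonpos hpos hp).comp
      tendsto_natCast_atTop_atTop).eventually_lt_atBot 0).and h₀).exists
    exact (hk.trans_le hnn).false

end Polynomial

theorem Finsupp.sum_id_fin_two (v : Fin 2 →₀ ℕ) : (v.sum fun _ e => e) = v 0 + v 1 := by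
  rw [Finsupp.sum_fintype _ _ (fun _ => rfl), Fin.sum_univ_two]

namespace MvPolynomial

variable {R : Type*} [CommRing R]

noncomputable def alongLine (u : R) (φ : MvPolynomial (Fin 2) R) : R[X] :=
  aeval ![Polynomial.C u * Polynomial.X, Polynomial.X] φ

theorem eval_alongLine (u t : R) (φ : MvPolynomial (Fin 2) R) :
    (alongLine u φ).eval t = eval ![u * t, t] φ := by
  have hpt : (fun i => Polynomial.aeval t (![Polynomial.C u * Polynomial.X, Polynomial.X] i)) =
      ![u * t, t] := by
    ext i
    fin_cases i <;> simp
  rw [alongLine, ← Polynomial.coe_aeval_eq_eval, ← AlgHom.comp_apply, comp_aeval, hpt]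
  rfl

theorem alongLine_eq_sum (u : R) (φ : MvPolynomial (Fin 2) R) :
    alongLine u φ = ∑ v ∈ φ.support,
      Polynomial.C (φ.coeff v * u ^ v 0) * Polynomial.X ^ (v 0 + v 1) := by
  rw [alongLine, aeval_def, eval₂_eq']
  refine Finset.sum_congr rfl fun v _ => ?_
  simp only [Fin.prod_univ_two, Matrix.cons_val_zero, Matrix.cons_val_one,
    mul_pow, ← Polynomial.C_pow, map_mul, Polynomial.algebraMap_eq, pow_add]
  ring

theorem natDegree_alongLine_le (u : R) (φ : MvPolynomial (Fin 2) R) :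
    (alongLine u φ).natDegree ≤ φ.totalDegree := by
  rw [alongLine_eq_sum]
  refine natDegree_sum_le_of_forall_le _ _ fun v hv => ?_
  refine (natDegree_C_mul_le _ _).trans ((natDegree_X_pow_le _).trans ?_)
  simpa [Finsupp.sum_id_fin_two] using le_totalDegree hv

theorem coeff_alongLine (u : R) (φ : MvPolynomial (Fin 2) R) (d : ℕ) :
    (alongLine u φ).coeff d =
      ∑ v ∈ φ.support with v 0 + v 1 = d, φ.coeff v * u ^ v 0 := by
  simp only [alongLine_eq_sum, finsetSum_coeff, coeff_C_mul_X_pow, Finset.sum_filter, eq_comm]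

theorem exists_natDegree_alongLine_eq [IsDomain R] [CharZero R] (φ : MvPolynomial (Fin 2) R) :
    ∃ u : ℕ, 0 < u ∧ (alongLine (u : R) φ).natDegree = φ.totalDegree := by
  rcases eq_or_ne φ 0 with rfl | hφ
  · exact ⟨1, one_pos, by simp [alongLine]⟩
  set d := φ.totalDegree
  -- the leading coefficient of `φ(u t, t)` is the dehomogenised top component of `φ` at `u`
  set top : R[X] := ∑ v ∈ φ.support with v 0 + v 1 = d,
    Polynomial.C (φ.coeff v) * Polynomial.X ^ v 0
  have coeff_eq_top : ∀ u : R, (alongLine u φ).coeff d = top.eval u := by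
    simp [coeff_alongLine, top, eval_finsetSum]
  obtain ⟨v₀, hv₀, hv₀d⟩ := Finset.exists_mem_eq_sup φ.support (support_nonempty.2 hφ)
    (fun v => v.sum fun _ e => e)
  rw [← totalDegree, Finsupp.sum_id_fin_two] at hv₀d
  have htop_coeff : top.coeff (v₀ 0) = φ.coeff v₀ := by
    rw [finsetSum_coeff, Finset.sum_eq_single_of_mem v₀ (Finset.mem_filter.2 ⟨hv₀, hv₀d.symm⟩)]
    · simp
    · intro v hv hne
      rw [Finset.mem_filter] at hv
      have : v 0 ≠ v₀ 0 := fun h0 => hne (by ext i; fin_cases i <;> simp <;> omega)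
      simp [Ne.symm this]
  have htop : top ≠ 0 := fun h0 => mem_support_iff.1 hv₀ (by simp [← htop_coeff, h0])
  obtain ⟨u, hu, hne⟩ : ∃ u : ℕ, 0 < u ∧ top.eval (u : R) ≠ 0 := by
    by_contra! h
    refine htop (eq_zero_of_infinite_isRoot _ (Set.infinite_of_injective_forall_mem
      (f := fun k : ℕ => ((k + 1 : ℕ) : R)) (Nat.cast_injective.comp Nat.succ_injective) ?_))
    exact fun k => h _ k.succ_pos
  exact ⟨u, hu, (natDegree_alongLine_le _ _).antisymm
    (le_natDegree_of_ne_zero (coeff_eq_top _ ▸ hne))⟩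

end MvPolynomial

open MvPolynomial in
theorem natDegree_eq_totalDegree_of_sandwich {𝕜 : Type*} [NormedField 𝕜] [LinearOrder 𝕜]
    [IsStrictOrderedRing 𝕜] [OrderTopology 𝕜] [Archimedean 𝕜]
    {ψ : 𝕜[X]} {φ : MvPolynomial (Fin 2) 𝕜}
    (hψ : ∀ᶠ r : ℕ in atTop, 0 ≤ ψ.eval (r : 𝕜))
    (hφ : ∀ᶠ x : ℕ × ℕ in atTop ×ˢ atTop, 0 ≤ eval ![(x.1 : 𝕜), x.2] φ)
    (hlower : ∀ᶠ r : ℕ in atTop, ψ.eval (r : 𝕜) ≤ eval ![(r : 𝕜), r] φ)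
    (hupper : ∀ᶠ x : ℕ × ℕ in atTop ×ˢ atTop,
      eval ![(x.1 : 𝕜), x.2] φ ≤ ψ.eval ((x.1 + x.2 : ℕ) : 𝕜)) :
    ψ.natDegree = φ.totalDegree := by
  refine le_antisymm ((natDegree_le_of_eventually_le hψ ?_).trans (natDegree_alongLine_le 1 φ)) ?_
  · simpa [eval_alongLine] using hlower
  obtain ⟨u, hu, hdeg⟩ := exists_natDegree_alongLine_eq (R := 𝕜) φ
  have hline : Tendsto (fun k : ℕ => (u * k, k)) atTop (atTop ×ˢ atTop) :=
    (tendsto_id.const_mul_atTop' hu).prodMk tendsto_id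
  have hcomp :
      (ψ.comp (Polynomial.C ((u + 1 : ℕ) : 𝕜) * Polynomial.X)).natDegree = ψ.natDegree := by
    rw [natDegree_comp, natDegree_C_mul_X _ (by positivity), mul_one]
  rw [← hdeg, ← hcomp]
  refine natDegree_le_of_eventually_le ?_ ?_
  · simpa [eval_alongLine] using hline.eventually hφ
  · refine (hline.eventually hupper).mono fun k hk => ?_
    simpa [eval_alongLine, add_mul] using hk

section CommutingProducts

variable {A : Type*} [Monoid A]

theorem mul_prod_ofFn_pow {N : ℕ} (f : Fin N → A) (hf : ∀ i j, Commute (f i) (f j))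
    (a : Fin N → ℕ) (i : Fin N) :
    f i * (List.ofFn fun j => f j ^ a j).prod =
      (List.ofFn fun j => f j ^ (a + Pi.single i 1 : Fin N → ℕ) j).prod := by
  induction N with
  | zero => exact i.elim0
  | succ N ih =>
    simp only [List.ofFn_succ, List.prod_cons]
    cases i using Fin.cases with
    | zero => simp [pow_succ', mul_assoc]
    | succ k =>
      rw [← mul_assoc, ((hf _ _).pow_right _).eq, mul_assoc,
        ih (fun j => f j.succ) (fun _ _ => hf _ _) (fun j => a j.succ) k]
      simp [Pi.single_apply]

theorem pow_mul_mem_of_mul_mem {F : ℕ → Set A} {a : A}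
    (ha : ∀ c x, x ∈ F c → a * x ∈ F (c + 1)) (k : ℕ) {c : ℕ} {x : A} (hx : x ∈ F c) :
    a ^ k * x ∈ F (k + c) := by
  induction k with
  | zero => simpa using hx
  | succ k ih =>
    rw [pow_succ', mul_assoc, add_right_comm]
    exact ha _ _ ih

theorem prod_ofFn_pow_mul_mem {N : ℕ} (f : Fin N → A) {F : ℕ → Set A}
    (hf : ∀ i c x, x ∈ F c → f i * x ∈ F (c + 1)) (a : Fin N → ℕ) {c : ℕ} {x : A}
    (hx : x ∈ F c) : (List.ofFn fun i => f i ^ a i).prod * x ∈ F (∑ i, a i + c) := by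
  induction N generalizing c x with
  | zero => simpa using hx
  | succ N ih =>
    rw [List.ofFn_succ, List.prod_cons, mul_assoc, Fin.sum_univ_succ, add_assoc]
    exact pow_mul_mem_of_mul_mem (hf 0) _ (ih (fun j => f j.succ) (fun _ => hf _) _ hx)

end CommutingProducts

section Operators

variable {K : Type*} [CommRing K] {n : ℕ}

open MvPolynomial

theorem mulX_commute (i j : Fin n) : Commute (mulX K n i) (mulX K n j) :=
  LinearMap.ext fun p => mul_left_comm (X i) (X j) p

theorem pdOp_commute (i j : Fin n) : Commute (pdOp K n i) (pdOp K n j) := by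
  refine LinearMap.ext fun p => ?_
  induction p using MvPolynomial.induction_on' with
  | monomial s a =>
    show pderiv i (pderiv j (monomial s a)) = pderiv j (pderiv i (monomial s a))
    rcases eq_or_ne i j with rfl | hij
    · rfl
    · simp only [pderiv_monomial, Finsupp.tsub_apply, Finsupp.single_apply, if_neg hij,
        if_neg hij.symm, tsub_zero, mul_right_comm a]
      rw [tsub_right_comm]
  | add p q hp hq => simp only [map_add, hp, hq]

theorem prod_ofFn_mulX_pow (α : Fin n → ℕ) :
    (List.ofFn fun i => mulX K n i ^ α i).prod =
      Algebra.lmul K _ (monomial (Finsupp.equivFunOnFinite.symm α) 1) := by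
  rw [monomial_eq, map_one, one_mul, Finsupp.prod_fintype _ _ fun _ => pow_zero _,
    ← List.prod_ofFn, map_list_prod, List.map_ofFn]
  simp only [Function.comp_def, map_pow, Finsupp.equivFunOnFinite_symm_apply_apply]
  rfl

theorem pdOp_mul_lmul (i : Fin n) (p : MvPolynomial (Fin n) K) :
    pdOp K n i * Algebra.lmul K _ p =
      Algebra.lmul K _ p * pdOp K n i + Algebra.lmul K _ (pderiv i p) :=
  LinearMap.ext fun q => by simp [pdOp, add_comm, mul_comm]

theorem wMonEnd_zero : wMonEnd K n 0 0 = 1 := by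
  simp [wMonEnd]

theorem mulX_mul_wMonEnd (i : Fin n) (α β : Fin n → ℕ) :
    mulX K n i * wMonEnd K n α β = wMonEnd K n (α + Pi.single i 1) β := by
  rw [wMonEnd, ← mul_assoc, mul_prod_ofFn_pow _ mulX_commute]
  rfl

-- `α - Pi.single i 1` truncates when `α i = 0`, but then its coefficient `α i` vanishes.
theorem pdOp_mul_wMonEnd (i : Fin n) (α β : Fin n → ℕ) :
    pdOp K n i * wMonEnd K n α β =
      wMonEnd K n α (β + Pi.single i 1) + (α i : K) • wMonEnd K n (α - Pi.single i 1) β := by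
  have hsub : Finsupp.equivFunOnFinite.symm (α - Pi.single i 1) =
      Finsupp.equivFunOnFinite.symm α - Finsupp.single i 1 := by
    ext j
    simp [Pi.single_apply, Finsupp.single_apply, eq_comm]
  simp only [wMonEnd, prod_ofFn_mulX_pow, ← mul_assoc, pdOp_mul_lmul, add_mul]
  rw [mul_assoc _ (pdOp K n i), mul_prod_ofFn_pow _ pdOp_commute, pderiv_monomial, hsub,
    ← smul_mul_assoc, ← map_smul, MvPolynomial.smul_monomial]
  simp

end Operators

section Filtration

variable {K : Type*} [Field K] {n : ℕ}

noncomputable def weylX (i : Fin n) : WeylAlgebra K n :=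
  ⟨mulX K n i, Algebra.subset_adjoin (Or.inl ⟨i, rfl⟩)⟩

noncomputable def weylD (i : Fin n) : WeylAlgebra K n :=
  ⟨pdOp K n i, Algebra.subset_adjoin (Or.inr ⟨i, rfl⟩)⟩

theorem wMon_eq_prod (α β : Fin n → ℕ) :
    wMon K n α β = (List.ofFn fun i => weylX i ^ α i).prod *
      (List.ofFn fun i => weylD i ^ β i).prod := by
  apply Subtype.ext
  simp [wMon, wMonEnd, SubmonoidClass.coe_list_prod, List.map_ofFn, Function.comp_def, weylX,
    weylD]

theorem wMon_mem_bernW {α β : Fin n → ℕ} {r : ℕ} (h : ∑ i, α i + ∑ i, β i ≤ r) :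
    wMon K n α β ∈ bernW K n r :=
  Submodule.subset_span ⟨α, β, h, rfl⟩

theorem bernW_mono {r s : ℕ} (h : r ≤ s) : bernW K n r ≤ bernW K n s :=
  Submodule.span_mono fun _ ⟨α, β, hαβ, hD⟩ => ⟨α, β, hαβ.trans h, hD⟩

theorem one_mem_bernW : (1 : WeylAlgebra K n) ∈ bernW K n 0 := by
  convert wMon_mem_bernW (K := K) (α := 0) (β := 0) (r := 0) (by simp)
  exact Subtype.ext wMonEnd_zero.symm

theorem sum_add_single_one (α : Fin n → ℕ) (i : Fin n) :
    ∑ j, (α + Pi.single i 1 : Fin n → ℕ) j = ∑ j, α j + 1 := by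
  simp [Finset.sum_add_distrib]

theorem weylX_mul_mem_bernW (i : Fin n) {c : ℕ} {E : WeylAlgebra K n} (hE : E ∈ bernW K n c) :
    weylX i * E ∈ bernW K n (c + 1) := by
  suffices bernW K n c ≤ (bernW K n (c + 1)).comap (LinearMap.mulLeft K (weylX i)) from this hE
  refine Submodule.span_le.2 ?_
  rintro _ ⟨α, β, hαβ, rfl⟩
  have hmul : weylX i * wMon K n α β = wMon K n (α + Pi.single i 1) β :=
    Subtype.ext (mulX_mul_wMonEnd i α β)
  simp only [SetLike.mem_coe, Submodule.mem_comap, LinearMap.mulLeft_apply, hmul]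
  exact wMon_mem_bernW (by rw [sum_add_single_one]; omega)

theorem weylD_mul_mem_bernW (i : Fin n) {c : ℕ} {E : WeylAlgebra K n} (hE : E ∈ bernW K n c) :
    weylD i * E ∈ bernW K n (c + 1) := by
  suffices bernW K n c ≤ (bernW K n (c + 1)).comap (LinearMap.mulLeft K (weylD i)) from this hE
  refine Submodule.span_le.2 ?_
  rintro _ ⟨α, β, hαβ, rfl⟩
  have hmul : weylD i * wMon K n α β =
      wMon K n α (β + Pi.single i 1) + (α i : K) • wMon K n (α - Pi.single i 1) β :=
    Subtype.ext (pdOp_mul_wMonEnd i α β)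
  have hsub : ∑ j, (α - Pi.single i 1 : Fin n → ℕ) j ≤ ∑ j, α j :=
    Finset.sum_le_sum fun _ _ => tsub_le_self
  simp only [SetLike.mem_coe, Submodule.mem_comap, LinearMap.mulLeft_apply, hmul]
  exact add_mem (wMon_mem_bernW (by rw [sum_add_single_one]; omega))
    (Submodule.smul_mem _ _ (wMon_mem_bernW (by omega)))

theorem bernW_mul_mem {r c : ℕ} {D E : WeylAlgebra K n} (hD : D ∈ bernW K n r)
    (hE : E ∈ bernW K n c) : D * E ∈ bernW K n (r + c) := by
  suffices bernW K n r ≤ (bernW K n (r + c)).comap (LinearMap.mulRight K E) from this hD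
  refine Submodule.span_le.2 ?_
  rintro _ ⟨α, β, hαβ, rfl⟩
  simp only [SetLike.mem_coe, Submodule.mem_comap, LinearMap.mulRight_apply, wMon_eq_prod,
    mul_assoc]
  have hβ := prod_ofFn_pow_mul_mem (F := fun c => (bernW K n c : Set (WeylAlgebra K n))) weylD
    (fun i _ _ => weylD_mul_mem_bernW i) β hE
  have hαβE := prod_ofFn_pow_mul_mem (F := fun c => (bernW K n c : Set (WeylAlgebra K n))) weylX
    (fun i _ _ => weylX_mul_mem_bernW i) α hβ
  exact bernW_mono (by omega) hαβE

theorem exists_mem_bernW (D : WeylAlgebra K n) : ∃ r, D ∈ bernW K n r := by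
  obtain ⟨D, hD⟩ := D
  induction hD using Algebra.adjoin_induction with
  | mem x hx =>
    refine ⟨1, ?_⟩
    rcases hx with ⟨i, rfl⟩ | ⟨i, rfl⟩
    · show weylX i ∈ _
      simpa using weylX_mul_mem_bernW (K := K) i one_mem_bernW
    · show weylD i ∈ _
      simpa using weylD_mul_mem_bernW (K := K) i one_mem_bernW
  | algebraMap k =>
    refine ⟨0, ?_⟩
    show algebraMap K (WeylAlgebra K n) k ∈ bernW K n 0
    rw [Algebra.algebraMap_eq_smul_one]
    exact Submodule.smul_mem _ _ one_mem_bernW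
  | add x y _ _ ihx ihy =>
    obtain ⟨r, hr⟩ := ihx
    obtain ⟨s, hs⟩ := ihy
    exact ⟨max r s, add_mem (bernW_mono (le_max_left r s) hr) (bernW_mono (le_max_right r s) hs)⟩
  | mul x y _ _ ihx ihy =>
    obtain ⟨r, hr⟩ := ihx
    obtain ⟨s, hs⟩ := ihy
    exact ⟨r + s, bernW_mul_mem hr hs⟩

end Filtration

section Module

variable {K : Type*} [Field K] {n : ℕ} {M : Type*} [AddCommGroup M]
  [Module (WeylAlgebra K n) M] [Module K M] [IsScalarTower K (WeylAlgebra K n) M]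
  {m : ℕ} {g : Fin m → M}

variable (g) in
theorem bernFil_le_biFil (r : ℕ) : bernFil K n M m g r ≤ biFil K n M m g r r :=
  Submodule.span_mono fun _ ⟨α, β, j, h, hx⟩ => ⟨α, β, j, by omega, by omega, hx⟩

variable (g) in
theorem biFil_le_bernFil (r s : ℕ) : biFil K n M m g r s ≤ bernFil K n M m g (r + s) :=
  Submodule.span_mono fun _ ⟨α, β, j, hα, hβ, hx⟩ => ⟨α, β, j, by omega, hx⟩

theorem bernFil_mono {r s : ℕ} (h : r ≤ s) : bernFil K n M m g r ≤ bernFil K n M m g s :=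
  Submodule.span_mono fun _ ⟨α, β, j, hαβ, hx⟩ => ⟨α, β, j, hαβ.trans h, hx⟩

instance (r s : ℕ) : FiniteDimensional K (biFil K n M m g r s) := by
  refine FiniteDimensional.span_of_finite K (((Set.finite_Iic (fun _ => r : Fin n → ℕ)).prod
    ((Set.finite_Iic (fun _ => s : Fin n → ℕ)).prod Set.finite_univ)).image
      (fun z => wMon K n z.1 z.2.1 • g z.2.2) |>.subset ?_)
  rintro _ ⟨α, β, j, hα, hβ, rfl⟩
  refine ⟨(α, β, j), ⟨fun i => ?_, fun i => ?_, trivial⟩, rfl⟩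
  · exact (Finset.single_le_sum (fun i _ => Nat.zero_le (α i)) (Finset.mem_univ i)).trans hα
  · exact (Finset.single_le_sum (fun i _ => Nat.zero_le (β i)) (Finset.mem_univ i)).trans hβ

instance (r : ℕ) : FiniteDimensional K (bernFil K n M m g r) :=
  Submodule.finiteDimensional_of_le (bernFil_le_biFil g r)

theorem smul_mem_bernFil_of_mem_bernW {t : ℕ} {D : WeylAlgebra K n} (hD : D ∈ bernW K n t)
    (j : Fin m) : D • g j ∈ bernFil K n M m g t := by
  induction hD using Submodule.span_induction with
  | mem D hD =>
    obtain ⟨α, β, hαβ, rfl⟩ := hD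
    exact Submodule.subset_span ⟨α, β, j, hαβ, rfl⟩
  | zero => simp
  | add D E _ _ hD hE => simpa [add_smul] using add_mem hD hE
  | smul k D _ hD => simpa [smul_assoc] using Submodule.smul_mem _ k hD

theorem smul_mem_bernFil {r c : ℕ} {D : WeylAlgebra K n} {x : M} (hD : D ∈ bernW K n r)
    (hx : x ∈ bernFil K n M m g c) : D • x ∈ bernFil K n M m g (r + c) := by
  suffices bernFil K n M m g c ≤
      (bernFil K n M m g (r + c)).comap (DistribSMul.toLinearMap K M D) from this hx
  refine Submodule.span_le.2 ?_
  rintro _ ⟨α, β, j, hαβ, rfl⟩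
  simp only [SetLike.mem_coe, Submodule.mem_comap, DistribSMul.toLinearMap_apply, smul_smul]
  exact smul_mem_bernFil_of_mem_bernW (bernW_mono (by omega) (bernW_mul_mem hD
    (wMon_mem_bernW (α := α) (β := β) le_rfl))) j

theorem exists_mem_bernFil (hg : Submodule.span (WeylAlgebra K n) (Set.range g) = ⊤) (y : M) :
    ∃ c, y ∈ bernFil K n M m g c := by
  have hy : y ∈ Submodule.span (WeylAlgebra K n) (Set.range g) := hg ▸ Submodule.mem_top
  induction hy using Submodule.span_induction with
  | mem y hy =>
    obtain ⟨j, rfl⟩ := hy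
    exact ⟨0, by simpa using smul_mem_bernFil_of_mem_bernW (g := g) (one_mem_bernW (n := n)) j⟩
  | zero => exact ⟨0, zero_mem _⟩
  | add x y _ _ hx hy =>
    obtain ⟨r, hr⟩ := hx
    obtain ⟨s, hs⟩ := hy
    exact ⟨max r s, add_mem (bernFil_mono (le_max_left r s) hr)
      (bernFil_mono (le_max_right r s) hs)⟩
  | smul D x _ hx =>
    obtain ⟨r, hD⟩ := exists_mem_bernW D
    obtain ⟨c, hc⟩ := hx
    exact ⟨r + c, smul_mem_bernFil hD hc⟩

theorem bernFil_le_of_forall_mem {p c : ℕ} {g' : Fin p → M}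
    (hc : ∀ j, g' j ∈ bernFil K n M m g c) (r : ℕ) :
    bernFil K n M p g' r ≤ bernFil K n M m g (r + c) :=
  Submodule.span_le.2 fun _ ⟨_, _, j, hαβ, hx⟩ => hx ▸ smul_mem_bernFil (wMon_mem_bernW hαβ) (hc j)

theorem natDegree_le_of_span_eq_top (hg : Submodule.span (WeylAlgebra K n) (Set.range g) = ⊤)
    {p : ℕ} {g' : Fin p → M} {ψ ψ' : ℚ[X]}
    (hψ : ∀ᶠ r : ℕ in atTop, ψ.eval (r : ℚ) = Module.finrank K (bernFil K n M m g r))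
    (hψ' : ∀ᶠ r : ℕ in atTop, ψ'.eval (r : ℚ) = Module.finrank K (bernFil K n M p g' r)) :
    ψ'.natDegree ≤ ψ.natDegree := by
  choose c hc using fun j => exists_mem_bernFil hg (g' j)
  set c₀ := Finset.univ.sup c
  have hc₀ : ∀ j, g' j ∈ bernFil K n M m g c₀ :=
    fun j => bernFil_mono (Finset.le_sup (Finset.mem_univ j)) (hc j)
  have hshift : (ψ.comp (X + C (c₀ : ℚ))).natDegree = ψ.natDegree := by
    rw [natDegree_comp, natDegree_X_add_C, mul_one]
  rw [← hshift]
  refine natDegree_le_of_eventually_le (hψ'.mono fun r h => h ▸ Nat.cast_nonneg _) ?_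
  filter_upwards [hψ', (tendsto_add_atTop_nat c₀).eventually hψ] with r h' h
  rw [h', eval_comp, eval_add, eval_X, eval_C, ← Nat.cast_add, h]
  exact_mod_cast Submodule.finrank_mono (bernFil_le_of_forall_mem hc₀ r)

theorem inBernsteinClass_iff [CharZero K]
    (hg : Submodule.span (WeylAlgebra K n) (Set.range g) = ⊤) {ψ : ℚ[X]}
    (hψ : ∀ᶠ r : ℕ in atTop, ψ.eval (r : ℚ) = Module.finrank K (bernFil K n M m g r)) :
    InBernsteinClass K n M ↔ ψ.natDegree = n := by
  constructor
  · rintro ⟨p, g', ψ', hg', hψ', rfl⟩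
    exact le_antisymm (natDegree_le_of_span_eq_top hg' (eventually_atTop.2 hψ') hψ)
      (natDegree_le_of_span_eq_top hg hψ (eventually_atTop.2 hψ'))
  · exact fun h => ⟨m, g, ψ, hg, eventually_atTop.1 hψ, h⟩

end Module

theorem characteristic_vs_bernstein_general
    (K : Type*) [Field K] [CharZero K] (n : ℕ)
    (M : Type*) [AddCommGroup M] [Module (WeylAlgebra K n) M]
    [Module K M] [IsScalarTower K (WeylAlgebra K n) M]
    (m : ℕ) (g : Fin m → M)
    (hgen : Submodule.span (WeylAlgebra K n) (Set.range g) = ⊤)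
    (ψ : Polynomial ℚ)
    (hψ : ∃ r₀ : ℕ, ∀ r : ℕ, r₀ ≤ r →
      ψ.eval (r : ℚ) = Module.finrank K (bernFil K n M m g r))
    (φ : MvPolynomial (Fin 2) ℚ)
    (hφ : ∃ r₀ s₀ : ℕ, ∀ r s : ℕ, r₀ ≤ r → s₀ ≤ s →
      MvPolynomial.eval ![(r : ℚ), (s : ℚ)] φ =
        Module.finrank K (biFil K n M m g r s)) :
    (∃ r₀ : ℕ, ∀ r : ℕ, r₀ ≤ r →
      ψ.eval (r : ℚ) ≤ MvPolynomial.eval ![(r : ℚ), (r : ℚ)] φ ∧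
      MvPolynomial.eval ![(r : ℚ), (r : ℚ)] φ ≤ ψ.eval ((2 * r : ℕ) : ℚ)) ∧
    ψ.natDegree = φ.totalDegree ∧
    ((∃ x : M, x ≠ 0) → (InBernsteinClass K n M ↔ φ.totalDegree = n)) := by
  obtain ⟨r₀, s₀, hφ⟩ := hφ
  replace hψ := eventually_atTop.2 hψ
  replace hφ : ∀ᶠ x : ℕ × ℕ in atTop ×ˢ atTop,
      MvPolynomial.eval ![(x.1 : ℚ), x.2] φ = Module.finrank K (biFil K n M m g x.1 x.2) :=
    ((eventually_ge_atTop r₀).prod_mk (eventually_ge_atTop s₀)).mono fun x hx => hφ _ _ hx.1 hx.2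
  have hdiag : Tendsto (fun r : ℕ => (r, r)) atTop (atTop ×ˢ atTop) := tendsto_id.prodMk tendsto_id
  have hlower : ∀ᶠ r : ℕ in atTop, ψ.eval (r : ℚ) ≤ MvPolynomial.eval ![(r : ℚ), r] φ := by
    filter_upwards [hψ, hdiag.eventually hφ] with r hψr hφr
    rw [hψr, hφr]
    exact_mod_cast Submodule.finrank_mono (bernFil_le_biFil g r)
  have hsum : Tendsto (fun x : ℕ × ℕ => x.1 + x.2) (atTop ×ˢ atTop) atTop :=
    tendsto_atTop_mono (fun x => Nat.le_add_right x.1 x.2) tendsto_fst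
  have hupper : ∀ᶠ x : ℕ × ℕ in atTop ×ˢ atTop,
      MvPolynomial.eval ![(x.1 : ℚ), x.2] φ ≤ ψ.eval ((x.1 + x.2 : ℕ) : ℚ) := by
    filter_upwards [hφ, hsum.eventually hψ] with x hφx hψx
    rw [hφx, hψx]
    exact_mod_cast Submodule.finrank_mono (biFil_le_bernFil g x.1 x.2)
  have hdeg : ψ.natDegree = φ.totalDegree :=
    natDegree_eq_totalDegree_of_sandwich (hψ.mono fun _ h => h ▸ Nat.cast_nonneg _)
      (hφ.mono fun _ h => h ▸ Nat.cast_nonneg _) hlower hupper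
  refine ⟨eventually_atTop.1 ((hlower.and (hdiag.eventually hupper)).mono fun r h =>
    ⟨h.1, by simpa [two_mul] using h.2⟩), hdeg, fun _ => ?_⟩
  rw [← hdeg]
  exact inBernsteinClass_iff hgen hψ

/-- If `φ_M(t₁,t₂)` and `ψ_M(t)` are the bivariate
characteristic polynomial and the Bernstein polynomial associated with the
same finite system of generators of `M`, then
`ψ_M(r) ≤ φ_M(r,r) ≤ ψ_M(2r)` for all sufficiently large `r`; consequently
`deg ψ_M = deg φ_M`, and (for `M ≠ 0`) `M ∈ 𝓑ₙ` iff `deg φ_M = n`. -/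
theorem characteristic_vs_bernstein
    (K : Type*) [Field K] [CharZero K] (n : ℕ) (hn : 1 ≤ n)
    (M : Type*) [AddCommGroup M] [Module (WeylAlgebra K n) M]
    [Module K M] [IsScalarTower K (WeylAlgebra K n) M]
    (m : ℕ) (g : Fin m → M)
    (hgen : Submodule.span (WeylAlgebra K n) (Set.range g) = ⊤)
    (ψ : Polynomial ℚ)
    (hψ : ∃ r₀ : ℕ, ∀ r : ℕ, r₀ ≤ r →
      ψ.eval (r : ℚ) = Module.finrank K (bernFil K n M m g r))
    (φ : MvPolynomial (Fin 2) ℚ)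
    (hφ : ∃ r₀ s₀ : ℕ, ∀ r s : ℕ, r₀ ≤ r → s₀ ≤ s →
      MvPolynomial.eval ![(r : ℚ), (s : ℚ)] φ =
        Module.finrank K (biFil K n M m g r s)) :
    (∃ r₀ : ℕ, ∀ r : ℕ, r₀ ≤ r →
      ψ.eval (r : ℚ) ≤ MvPolynomial.eval ![(r : ℚ), (r : ℚ)] φ ∧
      MvPolynomial.eval ![(r : ℚ), (r : ℚ)] φ ≤ ψ.eval ((2 * r : ℕ) : ℚ)) ∧
    ψ.natDegree = φ.totalDegree ∧
    ((∃ x : M, x ≠ 0) → (InBernsteinClass K n M ↔ φ.totalDegree = n)) :=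
  characteristic_vs_bernstein_general K n M m g hgen ψ hψ φ hφ
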